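/- Let n ≥ 3, (T, Σ, ⟠) an n-angulated category, A a full subcategory closed under extensions, and E an almost n-exact structure for A. (1) For every ideal I in A one has the inclusions I ⊆ Φ_E(PB_E(I)) ⊆ ⊥(I^⊥), and both inclusions are equalities when I is a special precovering ideal. (2) For every ideal J in A one has J ⊆ Φ^E(PO_E(J)) ⊆ (⊥J)^⊥, and both inclusions are equalities when J is a special preenveloping ideal. -/

import Mathlib

/-!
Common framework: `n`-angulated categories (Geiss–Keller–Oppermann), almost `n`-exact
structures on an extension closed subcategory, ideals, phantom ideals, (special)
precovers/preenvelopes, relative phantoms, pullback/pushout almost `n`-exact structures.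
-/

open CategoryTheory CategoryTheory.Limits ZeroObject

universe v u

namespace IdealApprox

/-- An `n`-`Σ`-sequence `A₁ → A₂ → ⋯ → Aₙ → ΣA₁` in `T`.  The objects are
`obj 0, …, obj (n-1)`; `mor i : obj i ⟶ obj (i+1)` for `i ≤ n - 2` are the structure
morphisms (indices `≥ n - 1` are junk), and `phantom : obj (n-1) ⟶ S.obj (obj 0)`
is the last morphism `αₙ`. -/
structure NSeq (n : ℕ) (T : Type u) [Category.{v} T] (S : T ⥤ T) where
  obj : ℕ → T
  mor : ∀ i : ℕ, obj i ⟶ obj (i + 1)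
  phantom : obj (n - 1) ⟶ S.obj (obj 0)

/-- A morphism of `n`-`Σ`-sequences. -/
structure NSeqHom {n : ℕ} {T : Type u} [Category.{v} T] {S : T ⥤ T}
    (d e : NSeq n T S) where
  app : ∀ i : ℕ, d.obj i ⟶ e.obj i
  comm : ∀ i : ℕ, i + 2 ≤ n → app i ≫ e.mor i = d.mor i ≫ app (i + 1)
  comm_phantom : app (n - 1) ≫ e.phantom = d.phantom ≫ S.map (app 0)

section Defs

variable {n : ℕ} {T : Type u} [Category.{v} T] [Preadditive T] [HasZeroObject T]
  [HasBinaryBiproducts T] {S : T ⥤ T}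

/-- The componentwise direct sum of two `n`-`Σ`-sequences. -/
noncomputable def biprodSeq (d e : NSeq n T S) : NSeq n T S where
  obj i := d.obj i ⊞ e.obj i
  mor i := biprod.map (d.mor i) (e.mor i)
  phantom := biprod.desc (d.phantom ≫ S.map biprod.inl) (e.phantom ≫ S.map biprod.inr)

/-- The trivial `n`-`Σ`-sequence `A = A → 0 → ⋯ → 0 → ΣA`. -/
noncomputable def trivialNSeq (A : T) : NSeq n T S where
  obj i := match i with
    | 0 => A
    | 1 => A
    | _ + 2 => 0
  mor i := match i with
    | 0 => 𝟙 A
    | _ + 1 => 0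
  phantom := 0

/-- `e` is the left rotation `A₂ → A₃ → ⋯ → Aₙ → ΣA₁ → ΣA₂` (with last morphism
`(-1)ⁿ Σα₁`) of `d`. -/
structure IsLeftRotation (d e : NSeq n T S) : Prop where
  hn : 3 ≤ n
  obj_eq : ∀ i : ℕ, i + 2 ≤ n → e.obj i = d.obj (i + 1)
  obj_last : e.obj (n - 1) = S.obj (d.obj 0)
  mor_eq : ∀ (i : ℕ) (h3 : i + 3 ≤ n),
    e.mor i = eqToHom (obj_eq i (by omega)) ≫ d.mor (i + 1) ≫
      eqToHom (obj_eq (i + 1) (by omega)).symm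
  mor_last : e.mor (n - 2) =
    eqToHom ((obj_eq (n - 2) (by omega)).trans
        (congrArg d.obj (by omega : n - 2 + 1 = n - 1))) ≫
      d.phantom ≫
      eqToHom (obj_last.symm.trans (congrArg e.obj (by omega : n - 1 = n - 2 + 1)))
  phantom_eq : e.phantom =
    eqToHom obj_last ≫ ((-1 : ℤ) ^ n • S.map (d.mor 0)) ≫
      eqToHom (congrArg S.obj (obj_eq 0 (by omega)).symm)

/-- `c` is the mapping cone of the morphism `φ : d ⟶ e` of `n`-`Σ`-sequences, i.e.
`c` has objects `A_{i+1} ⊞ B_i` and the matrix morphisms `[(-α, 0), (φ, β)]`. -/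
structure IsCone {d e : NSeq n T S} (φ : NSeqHom d e) (c : NSeq n T S) : Prop where
  hn : 3 ≤ n
  obj_eq : ∀ i : ℕ, i + 2 ≤ n → c.obj i = (d.obj (i + 1) ⊞ e.obj i)
  obj_last : c.obj (n - 1) = (S.obj (d.obj 0) ⊞ e.obj (n - 1))
  mor_eq : ∀ (i : ℕ) (h3 : i + 3 ≤ n),
    c.mor i = eqToHom (obj_eq i (by omega)) ≫
      (biprod.map (-(d.mor (i + 1))) (e.mor i) +
        biprod.fst ≫ φ.app (i + 1) ≫ biprod.inr) ≫
      eqToHom (obj_eq (i + 1) (by omega)).symm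
  mor_last : c.mor (n - 2) =
    eqToHom (obj_eq (n - 2) (by omega)) ≫
      (biprod.map (eqToHom (congrArg d.obj (by omega : n - 2 + 1 = n - 1)) ≫
          (-(d.phantom))) (e.mor (n - 2)) +
        biprod.fst ≫ eqToHom (congrArg d.obj (by omega : n - 2 + 1 = n - 1)) ≫
          φ.app (n - 1) ≫ eqToHom (congrArg e.obj (by omega : n - 1 = n - 2 + 1)) ≫
          biprod.inr) ≫
      eqToHom (show (S.obj (d.obj 0) ⊞ e.obj (n - 2 + 1)) = c.obj (n - 2 + 1) by
        rw [show n - 2 + 1 = n - 1 from by omega]; exact obj_last.symm)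
  phantom_eq : c.phantom =
    eqToHom obj_last ≫
      biprod.desc ((-(S.map (d.mor 0))) ≫ S.map biprod.inl +
          S.map (φ.app 0) ≫ S.map biprod.inr)
        (e.phantom ≫ S.map biprod.inr) ≫
      eqToHom (congrArg S.obj (obj_eq 0 (by omega)).symm)

/-- The axioms (F1)–(F4) for a class `Ang` of `n`-`Σ`-sequences to be an
`n`-angulation of `(T, S)`; the members of `Ang` are the `n`-angles. -/
structure IsNAngulated (Ang : Set (NSeq n T S)) : Prop where
  /-- (F1)(a): closed under direct sums. -/
  biprod_mem : ∀ d e : NSeq n T S, d ∈ Ang → e ∈ Ang → biprodSeq d e ∈ Ang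
  /-- (F1)(a): closed under direct summands. -/
  summand_mem : ∀ d e : NSeq n T S, e ∈ Ang →
    (∃ (f : NSeqHom d e) (g : NSeqHom e d), ∀ i, f.app i ≫ g.app i = 𝟙 (d.obj i)) →
    d ∈ Ang
  /-- (F1)(b): contains the trivial sequences. -/
  trivial_mem : ∀ A : T, (trivialNSeq A : NSeq n T S) ∈ Ang
  /-- (F1)(c): every morphism is the first morphism of some `n`-angle. -/
  complete : ∀ {X Y : T} (f : X ⟶ Y), ∃ d ∈ Ang, ∃ (h0 : d.obj 0 = X) (h1 : d.obj 1 = Y),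
    d.mor 0 = eqToHom h0 ≫ f ≫ eqToHom h1.symm
  /-- (F2): closed under rotation, in both directions. -/
  rotate : ∀ d e : NSeq n T S, IsLeftRotation d e → (d ∈ Ang ↔ e ∈ Ang)
  /-- (F3)+(F4): any commutative square on the first morphisms of two `n`-angles
  extends to a morphism of `n`-angles whose mapping cone is again an `n`-angle. -/
  fill : ∀ d e : NSeq n T S, d ∈ Ang → e ∈ Ang →
    ∀ (f0 : d.obj 0 ⟶ e.obj 0) (f1 : d.obj 1 ⟶ e.obj 1),
      f0 ≫ e.mor 0 = d.mor 0 ≫ f1 →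
      ∃ φ : NSeqHom d e, φ.app 0 = f0 ∧ φ.app 1 = f1 ∧ ∃ c ∈ Ang, IsCone φ c

/-- All (meaningful) objects of the sequence `d` belong to the subcategory `A`. -/
def objsIn (A : Set T) (d : NSeq n T S) : Prop := ∀ i : ℕ, i < n → d.obj i ∈ A

/-- The class `D_A` of `n`-angles all of whose objects lie in `A`. -/
def DA (Ang : Set (NSeq n T S)) (A : Set T) : Set (NSeq n T S) :=
  {d | d ∈ Ang ∧ objsIn A d}

/-- The full subcategory `A` is closed under extensions in `(T, S, Ang)`. -/
def ClosedUnderExtensions (Ang : Set (NSeq n T S)) (A : Set T) : Prop :=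
  ∀ d ∈ Ang, d.obj 0 ∈ A → d.obj (n - 1) ∈ A → objsIn A d

/-- An almost `n`-exact structure `E ⊆ D_A` for `A`: (N1) closed under direct sums and
containing all split `n`-angles, (N2) closed under base change, (N3) closed under
cobase change. -/
structure IsAlmostNExact (Ang : Set (NSeq n T S)) (A : Set T)
    (E : Set (NSeq n T S)) : Prop where
  subset_DA : E ⊆ DA Ang A
  sum_mem : ∀ d e : NSeq n T S, d ∈ E → e ∈ E → biprodSeq d e ∈ E
  split_mem : ∀ d ∈ DA Ang A, d.phantom = 0 → d ∈ E
  base_change : ∀ d ∈ E, ∀ e ∈ DA Ang A, ∀ (φ : NSeqHom e d) (h : e.obj 0 = d.obj 0),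
    φ.app 0 = eqToHom h → e ∈ E
  cobase_change : ∀ d ∈ E, ∀ e ∈ DA Ang A,
    ∀ (φ : NSeqHom d e) (h : d.obj (n - 1) = e.obj (n - 1)),
      φ.app (n - 1) = eqToHom h → e ∈ E

/-- The class `Φ(E)` of `E`-phantoms, i.e. last morphisms of `n`-angles in `E`. -/
def phant (E : Set (NSeq n T S)) : MorphismProperty T := fun X Y f =>
  ∃ d ∈ E, ∃ (hX : d.obj (n - 1) = X) (hY : S.obj (d.obj 0) = Y),
    f = eqToHom hX.symm ≫ d.phantom ≫ eqToHom hY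

/-- `f` is an `E`-inflation, i.e. the first morphism of some `n`-angle in `E`. -/
def IsInfl (E : Set (NSeq n T S)) {X Y : T} (f : X ⟶ Y) : Prop :=
  ∃ d ∈ E, ∃ (h0 : d.obj 0 = X) (h1 : d.obj 1 = Y),
    f = eqToHom h0.symm ≫ d.mor 0 ≫ eqToHom h1

/-- `f` is an `E`-deflation, i.e. the `(n-1)`-st morphism of some `n`-angle in `E`. -/
def IsDefl (E : Set (NSeq n T S)) {X Y : T} (f : X ⟶ Y) : Prop :=
  ∃ d ∈ E, ∃ (h0 : d.obj (n - 2) = X) (h1 : d.obj (n - 2 + 1) = Y),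
    f = eqToHom h0.symm ≫ d.mor (n - 2) ≫ eqToHom h1

/-- The ideal `E-proj` of `E`-projective morphisms of `A`: morphisms factoring
through every `E`-deflation with the appropriate target. -/
def EProj (A : Set T) (E : Set (NSeq n T S)) : MorphismProperty T := fun X Z f =>
  X ∈ A ∧ Z ∈ A ∧ ∀ ⦃P : T⦄ (p : P ⟶ Z), IsDefl E p → ∃ g : X ⟶ P, g ≫ p = f

/-- The ideal `E-inj` of `E`-injective morphisms of `A`: morphisms factoring
through every `E`-inflation with the appropriate source. -/
def EInj (A : Set T) (E : Set (NSeq n T S)) : MorphismProperty T := fun Z Y f =>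
  Z ∈ A ∧ Y ∈ A ∧ ∀ ⦃Q : T⦄ (m : Z ⟶ Q), IsInfl E m → ∃ g : Q ⟶ Y, m ≫ g = f

/-- An ideal in the full subcategory `A`: a class of morphisms of `A` closed under
sums of parallel morphisms and under composition with arbitrary morphisms of `A`. -/
structure IsIdeal (A : Set T) (I : MorphismProperty T) : Prop where
  src_mem : ∀ ⦃X Y : T⦄ (f : X ⟶ Y), I f → X ∈ A
  tgt_mem : ∀ ⦃X Y : T⦄ (f : X ⟶ Y), I f → Y ∈ A
  add_mem : ∀ ⦃X Y : T⦄ (f g : X ⟶ Y), I f → I g → I (f + g)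
  comp_mem : ∀ ⦃W X Y Z : T⦄ (f : W ⟶ X) (i : X ⟶ Y) (g : Y ⟶ Z),
    W ∈ A → Z ∈ A → I i → I (f ≫ i ≫ g)

/-- A phantom `A`-ideal: a class of morphisms `X → ΣB` with `X, B ∈ A`, closed under
sums and under `(Σg) ∘ φ ∘ f` for morphisms `f, g` of `A`. -/
structure IsPhantomIdeal (S : T ⥤ T) (A : Set T) (P : MorphismProperty T) : Prop where
  mem : ∀ ⦃X Y : T⦄ (φ : X ⟶ Y), P φ → X ∈ A ∧ ∃ B ∈ A, Y = S.obj B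
  add_mem : ∀ ⦃X Y : T⦄ (φ ψ : X ⟶ Y), P φ → P ψ → P (φ + ψ)
  comp_mem : ∀ ⦃X' X B B' : T⦄ (f : X' ⟶ X) (φ : X ⟶ S.obj B) (g : B ⟶ B'),
    X' ∈ A → X ∈ A → B ∈ A → B' ∈ A → P φ → P (f ≫ φ ≫ S.map g)

/-- `i` is an `I`-precover (of its target). -/
def IsPrecover (I : MorphismProperty T) {X A₀ : T} (i : X ⟶ A₀) : Prop :=
  I i ∧ ∀ ⦃X' : T⦄ (i' : X' ⟶ A₀), I i' → ∃ g : X' ⟶ X, g ≫ i = i'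

/-- `j` is an `I`-preenvelope (of its source). -/
def IsPreenvelope (I : MorphismProperty T) {B Y : T} (j : B ⟶ Y) : Prop :=
  I j ∧ ∀ ⦃Y' : T⦄ (j' : B ⟶ Y'), I j' → ∃ g : Y ⟶ Y', j ≫ g = j'

/-- The ideal `I` is precovering: every object of `A` has an `I`-precover. -/
def Precovering (A : Set T) (I : MorphismProperty T) : Prop :=
  ∀ A₀ ∈ A, ∃ (X : T) (i : X ⟶ A₀), IsPrecover I i

/-- The ideal `I` is preenveloping: every object of `A` has an `I`-preenvelope. -/
def Preenveloping (A : Set T) (I : MorphismProperty T) : Prop :=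
  ∀ B ∈ A, ∃ (Y : T) (j : B ⟶ Y), IsPreenvelope I j

/-- A phantom `A`-ideal `P` is precovering: every `ΣA₀` (`A₀ ∈ A`) has a `P`-precover. -/
def PhantPrecovering (S : T ⥤ T) (A : Set T) (P : MorphismProperty T) : Prop :=
  ∀ A₀ ∈ A, ∃ (X : T) (φ : X ⟶ S.obj A₀), IsPrecover P φ

/-- A phantom `A`-ideal `P` is preenveloping: every `B ∈ A` has a `P`-preenvelope. -/
def PhantPreenveloping (S : T ⥤ T) (A : Set T) (P : MorphismProperty T) : Prop :=
  ∀ B ∈ A, ∃ (Y : T) (φ : B ⟶ S.obj Y), IsPreenvelope P φ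

/-- There are enough `E`-injective morphisms: every object of `A` admits an
`E`-injective `E`-inflation out of it. -/
def EnoughInjectives (A : Set T) (E : Set (NSeq n T S)) : Prop :=
  ∀ A₀ ∈ A, ∃ (E₀ : T) (e : A₀ ⟶ E₀), IsInfl E e ∧ EInj A E e

/-- There are enough `E`-projective morphisms: every object of `A` admits an
`E`-projective `E`-deflation onto it. -/
def EnoughProjectives (A : Set T) (E : Set (NSeq n T S)) : Prop :=
  ∀ C ∈ A, ∃ (P : T) (p : P ⟶ C), IsDefl E p ∧ EProj A E p

/-- `f ⊥ g` with respect to `E`: `(Σg) φ f = 0` for all `E`-phantoms `φ`. -/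
def OrthRel (E : Set (NSeq n T S)) {X Z B Y : T} (f : X ⟶ Z) (g : B ⟶ Y) : Prop :=
  ∀ φ : Z ⟶ S.obj B, phant E φ → f ≫ φ ≫ S.map g = 0

/-- The right orthogonal ideal `M^⊥` (with respect to `E`) of a class of morphisms. -/
def perpRight (A : Set T) (E : Set (NSeq n T S)) (M : MorphismProperty T) :
    MorphismProperty T := fun B Y g =>
  B ∈ A ∧ Y ∈ A ∧ ∀ ⦃X Z : T⦄ (m : X ⟶ Z), M m → OrthRel E m g

/-- The left orthogonal ideal `⊥M` (with respect to `E`) of a class of morphisms. -/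
def perpLeft (A : Set T) (E : Set (NSeq n T S)) (M : MorphismProperty T) :
    MorphismProperty T := fun X Z f =>
  X ∈ A ∧ Z ∈ A ∧ ∀ ⦃B Y : T⦄ (m : B ⟶ Y), M m → OrthRel E f m

/-- `i : X ⟶ A₀` is a special `I`-precover with respect to `E`. -/
def IsSpecialPrecover (A : Set T) (E : Set (NSeq n T S)) (I : MorphismProperty T)
    {X A₀ : T} (i : X ⟶ A₀) : Prop :=
  I i ∧ ∃ d ∈ E, ∃ (hX : d.obj (n - 2) = X) (hA : d.obj (n - 2 + 1) = A₀),
    i = eqToHom hX.symm ≫ d.mor (n - 2) ≫ eqToHom hA ∧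
    ∃ (B : T) (φ : d.obj (n - 1) ⟶ S.obj B) (j : B ⟶ d.obj 0),
      phant E φ ∧ perpRight A E I j ∧ d.phantom = φ ≫ S.map j

/-- `j : B₀ ⟶ Y` is a special `J`-preenvelope with respect to `E`. -/
def IsSpecialPreenvelope (A : Set T) (E : Set (NSeq n T S)) (J : MorphismProperty T)
    {B₀ Y : T} (j : B₀ ⟶ Y) : Prop :=
  J j ∧ ∃ d ∈ E, ∃ (hB : d.obj 0 = B₀) (hY : d.obj 1 = Y),
    j = eqToHom hB.symm ≫ d.mor 0 ≫ eqToHom hY ∧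
    ∃ (C : T) (i : d.obj (n - 1) ⟶ C) (φ : C ⟶ S.obj (d.obj 0)),
      perpLeft A E J i ∧ phant E φ ∧ d.phantom = i ≫ φ

/-- The ideal `I` is special precovering with respect to `E`. -/
def SpecialPrecovering (A : Set T) (E : Set (NSeq n T S))
    (I : MorphismProperty T) : Prop :=
  ∀ A₀ ∈ A, ∃ (X : T) (i : X ⟶ A₀), IsSpecialPrecover A E I i

/-- The ideal `J` is special preenveloping with respect to `E`. -/
def SpecialPreenveloping (A : Set T) (E : Set (NSeq n T S))
    (J : MorphismProperty T) : Prop :=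
  ∀ B ∈ A, ∃ (Y : T) (j : B ⟶ Y), IsSpecialPreenvelope A E J j

/-- `(I, J)` is an ideal cotorsion pair with respect to `E`: `J = I^⊥` and `I = ⊥J`. -/
def IsIdealCotorsionPair (A : Set T) (E : Set (NSeq n T S))
    (I J : MorphismProperty T) : Prop :=
  J = perpRight A E I ∧ I = perpLeft A E J

/-- The ideal `Φ_E(F)` of `F`-phantoms relative to `E`. -/
def relPhant (A : Set T) (E F : Set (NSeq n T S)) : MorphismProperty T := fun X Z f =>
  X ∈ A ∧ Z ∈ A ∧ ∀ ⦃B : T⦄ (h : Z ⟶ S.obj B), phant E h → phant F (f ≫ h)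

/-- The ideal `Φ^E(F)` of `F`-cophantoms relative to `E`. -/
def relCophant (A : Set T) (E F : Set (NSeq n T S)) : MorphismProperty T := fun Z Y f =>
  Z ∈ A ∧ Y ∈ A ∧ ∀ ⦃W : T⦄ (h : W ⟶ Z), phant E (S.map h) → phant F (S.map (h ≫ f))

/-- The pullback almost `n`-exact structure `PB_E(I)` associated to an ideal `I`:
`n`-angles in `E` whose phantom factors as `ψ ∘ i` with `i ∈ I`, `ψ ∈ Φ(E)`. -/
def PB (E : Set (NSeq n T S)) (I : MorphismProperty T) : Set (NSeq n T S) :=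
  {d | d ∈ E ∧ ∃ (C : T) (i : d.obj (n - 1) ⟶ C) (ψ : C ⟶ S.obj (d.obj 0)),
    I i ∧ phant E ψ ∧ d.phantom = i ≫ ψ}

/-- The pushout almost `n`-exact structure `PO_E(J)` associated to an ideal `J`:
`n`-angles in `E` whose phantom factors as `(Σj) ∘ ψ` with `j ∈ J`, `ψ ∈ Φ(E)`. -/
def PO (E : Set (NSeq n T S)) (J : MorphismProperty T) : Set (NSeq n T S) :=
  {d | d ∈ E ∧ ∃ (B : T) (ψ : d.obj (n - 1) ⟶ S.obj B) (j : B ⟶ d.obj 0),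
    phant E ψ ∧ J j ∧ d.phantom = ψ ≫ S.map j}

/-- `E^I`: the `n`-angles from `A` whose phantom `φ` satisfies `(Σi) φ = 0` for
all `i ∈ I`. -/
def EUp (Ang : Set (NSeq n T S)) (A : Set T) (I : MorphismProperty T) :
    Set (NSeq n T S) :=
  {d | d ∈ DA Ang A ∧ ∀ ⦃Y : T⦄ (i : d.obj 0 ⟶ Y), I i → d.phantom ≫ S.map i = 0}

/-- `E_I`: the `n`-angles from `A` whose phantom `φ` satisfies `φ i = 0` for
all `i ∈ I`. -/
def EDown (Ang : Set (NSeq n T S)) (A : Set T) (I : MorphismProperty T) :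
    Set (NSeq n T S) :=
  {d | d ∈ DA Ang A ∧ ∀ ⦃X : T⦄ (i : X ⟶ d.obj (n - 1)), I i → i ≫ d.phantom = 0}

/-- `D_A(P)`: the `n`-angles from `A` whose phantom lies in `P`. -/
def DAI (Ang : Set (NSeq n T S)) (A : Set T) (P : MorphismProperty T) :
    Set (NSeq n T S) :=
  {d | d ∈ DA Ang A ∧ P d.phantom}

/-- `e : A₀ ⟶ E₀` is a special `H`-injective morphism with respect to `E`: it is
`H`-injective and embeds as the first morphism of an `n`-angle from `A` admitting a
morphism of `n`-angles, with identity ends, to an `n`-angle in `E` whose component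
at position `n` lies in `Φ_E(H)`. -/
def IsSpecialInj (Ang : Set (NSeq n T S)) (A : Set T) (E H : Set (NSeq n T S))
    {A₀ E₀ : T} (e : A₀ ⟶ E₀) : Prop :=
  EInj A H e ∧ ∃ d' ∈ DA Ang A, ∃ (h0 : d'.obj 0 = A₀) (h1 : d'.obj 1 = E₀),
    e = eqToHom h0.symm ≫ d'.mor 0 ≫ eqToHom h1 ∧
    ∃ d ∈ E, ∃ (φ : NSeqHom d' d) (hh : d'.obj 0 = d.obj 0),
      φ.app 0 = eqToHom hh ∧ relPhant A E H (φ.app (n - 1))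

/-- `p : P₀ ⟶ C` is a special `H`-projective morphism with respect to `E` (dual of
`IsSpecialInj`). -/
def IsSpecialProj (Ang : Set (NSeq n T S)) (A : Set T) (E H : Set (NSeq n T S))
    {P₀ C : T} (p : P₀ ⟶ C) : Prop :=
  EProj A H p ∧ ∃ d' ∈ DA Ang A, ∃ (h0 : d'.obj (n - 2) = P₀) (h1 : d'.obj (n - 2 + 1) = C),
    p = eqToHom h0.symm ≫ d'.mor (n - 2) ≫ eqToHom h1 ∧
    ∃ d ∈ E, ∃ (φ : NSeqHom d d') (hh : d.obj (n - 1) = d'.obj (n - 1)),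
      φ.app (n - 1) = eqToHom hh ∧ relCophant A E H (φ.app 0)

/-- There are enough special `H`-injective morphisms (with respect to `E`). -/
def EnoughSpecialInj (Ang : Set (NSeq n T S)) (A : Set T)
    (E H : Set (NSeq n T S)) : Prop :=
  ∀ A₀ ∈ A, ∃ (E₀ : T) (e : A₀ ⟶ E₀), IsSpecialInj Ang A E H e

/-- There are enough special `H`-projective morphisms (with respect to `E`). -/
def EnoughSpecialProj (Ang : Set (NSeq n T S)) (A : Set T)
    (E H : Set (NSeq n T S)) : Prop :=
  ∀ C ∈ A, ∃ (P₀ : T) (p : P₀ ⟶ C), IsSpecialProj Ang A E H p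

end Defs

/-!
For `f ∈ I` and an `E`-phantom `h`, base change along `f` produces an `n`-angle of `E` with
phantom `h f`, which therefore lies in `PB_E(I)`; this gives `I ⊆ Φ_E(PB_E(I))`. An
`f ∈ Φ_E(PB_E(I))` turns every `E`-phantom into one of the form `ψ i`, `i ∈ I`, which `I^⊥`
kills; this gives the second inclusion. Conversely, let `X → A₀ → ΣA₁` end a special
`I`-precover whose phantom is `(Σj) φ` with `j ∈ I^⊥`. A morphism `f ∈ ⊥(I^⊥)` into `A₀` kills
this phantom, so it factors through the precover (weak kernels in `n`-angles) and lies in `I`.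
The ideal `J` is treated dually, using cobase change and weak cokernels.

Base change itself needs (F3) at the last two positions and the realisation of every
`X → ΣB` as the last morphism of an `n`-angle; both come from undoing `n - 1` rotations, which
is possible because `Σ` is an equivalence.
-/

section

variable {T : Type u} [Category.{v} T] [Preadditive T] {n : ℕ}

lemma neg_one_pow_zsmul_neg_one_pow_zsmul {X Y : T} (f : X ⟶ Y) :
    ((-1 : ℤ) ^ n) • ((-1 : ℤ) ^ n) • f = f := by
  rw [smul_smul, ← mul_pow, neg_one_mul, neg_neg, one_pow, one_smul]

lemma eq_of_neg_one_pow_zsmul_eq {X Y : T} {f g : X ⟶ Y}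
    (h : ((-1 : ℤ) ^ n) • f = ((-1 : ℤ) ^ n) • g) : f = g := by
  simpa only [neg_one_pow_zsmul_neg_one_pow_zsmul] using congrArg (((-1 : ℤ) ^ n) • ·) h

end

section

variable {n : ℕ} {T : Type u} [Category.{v} T] {S : T ⥤ T}

lemma NSeqHom.app_congr {d e : NSeq n T S} (φ : NSeqHom d e) {i j : ℕ} (h : i = j) :
    φ.app i = eqToHom (congrArg d.obj h) ≫ φ.app j ≫ eqToHom (congrArg e.obj h).symm := by
  subst h; simp

lemma phant_eqToHom_conj {E : Set (NSeq n T S)} {X X' Y Y' : T} (hX : X = X') (hY : Y = Y')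
    {f : X ⟶ Y} (hf : phant E f) : phant E (eqToHom hX.symm ≫ f ≫ eqToHom hY) := by
  obtain ⟨d, hd, hXd, hYd, rfl⟩ := hf
  exact ⟨d, hd, hXd.trans hX, hYd.trans hY, by simp⟩

noncomputable def transport (e : NSeq n T S) (O : ℕ → T) (ι : ∀ i, O i ≅ e.obj i) :
    NSeq n T S where
  obj := O
  mor i := (ι i).hom ≫ e.mor i ≫ (ι (i + 1)).inv
  phantom := (ι (n - 1)).hom ≫ e.phantom ≫ S.map (ι 0).inv

variable [Preadditive T] [HasZeroObject T] [HasBinaryBiproducts T]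

lemma IsNAngulated.mem_of_iso {Ang : Set (NSeq n T S)} (hAng : IsNAngulated Ang)
    {d e : NSeq n T S} (he : e ∈ Ang) (ι : ∀ i, d.obj i ≅ e.obj i)
    (hcomm : ∀ i, i + 2 ≤ n → (ι i).hom ≫ e.mor i = d.mor i ≫ (ι (i + 1)).hom)
    (hph : (ι (n - 1)).hom ≫ e.phantom = d.phantom ≫ S.map (ι 0).hom) : d ∈ Ang := by
  refine hAng.summand_mem d e he
    ⟨⟨fun i => (ι i).hom, hcomm, hph⟩, ⟨fun i => (ι i).inv, fun i h => ?_, ?_⟩,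
      fun i => (ι i).hom_inv_id⟩
  · rw [Iso.inv_comp_eq, ← Category.assoc, hcomm i h, Category.assoc, Iso.hom_inv_id,
      Category.comp_id]
  · rw [Iso.inv_comp_eq, ← Category.assoc, hph, Category.assoc, ← S.map_comp,
      Iso.hom_inv_id, S.map_id, Category.comp_id]

/-- Since `summand_mem` asks for a retraction in every index, the junk objects `d.obj i`,
`n ≤ i`, have to be zero when the isomorphisms are only given in the range `i < n`. -/
lemma IsNAngulated.mem_of_iso_of_isZero {Ang : Set (NSeq n T S)} (hAng : IsNAngulated Ang)
    (hn : 0 < n) {d e : NSeq n T S} (he : e ∈ Ang) (hjunk : ∀ i, n ≤ i → IsZero (d.obj i))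
    (ι : ∀ i, i < n → (d.obj i ≅ e.obj i))
    (hcomm : ∀ i (h : i + 2 ≤ n),
      (ι i (by omega)).hom ≫ e.mor i = d.mor i ≫ (ι (i + 1) (by omega)).hom)
    (hph : (ι (n - 1) (by omega)).hom ≫ e.phantom = d.phantom ≫ S.map (ι 0 hn).hom) :
    d ∈ Ang := by
  refine hAng.summand_mem d e he
    ⟨⟨fun i => if h : i < n then (ι i h).hom else 0, fun i h => ?_, ?_⟩,
     ⟨fun i => if h : i < n then (ι i h).inv else 0, fun i h => ?_, ?_⟩, fun i => ?_⟩
  · simp only [dif_pos (show i < n by omega), dif_pos (show i + 1 < n by omega), hcomm i h]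
  · simp only [dif_pos (show n - 1 < n by omega), dif_pos hn, hph]
  · simp only [dif_pos (show i < n by omega), dif_pos (show i + 1 < n by omega)]
    rw [Iso.inv_comp_eq, ← Category.assoc, hcomm i h, Category.assoc, Iso.hom_inv_id,
      Category.comp_id]
  · simp only [dif_pos (show n - 1 < n by omega), dif_pos hn]
    rw [Iso.inv_comp_eq, ← Category.assoc, hph, Category.assoc, ← S.map_comp,
      Iso.hom_inv_id, S.map_id, Category.comp_id]
  · by_cases h : i < n
    · simp only [dif_pos h, Iso.hom_inv_id]
    · exact (hjunk i (by omega)).eq_of_src _ _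

lemma IsNAngulated.transport_mem {Ang : Set (NSeq n T S)} (hAng : IsNAngulated Ang) {e : NSeq n T S}
    (he : e ∈ Ang) (O : ℕ → T) (ι : ∀ i, O i ≅ e.obj i) : transport e O ι ∈ Ang :=
  hAng.mem_of_iso he ι (fun i _ => by simp [transport]) (by
    simp only [transport, Category.assoc, ← S.map_comp, Iso.inv_hom_id, S.map_id,
      Category.comp_id])

lemma IsNAngulated.exists_mem_obj_eq_of_iso {Ang : Set (NSeq n T S)} (hAng : IsNAngulated Ang)
    (hn : 3 ≤ n) {e : NSeq n T S} (he : e ∈ Ang) {X₀ X₁ X : T} (ι₀ : X₀ ≅ e.obj 0)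
    (ι₁ : X₁ ≅ e.obj 1) (ι : X ≅ e.obj (n - 1)) :
    ∃ v ∈ Ang, v.obj 0 = X₀ ∧ v.obj 1 = X₁ ∧ v.obj (n - 1) = X := by
  let O : ℕ → T := fun i =>
    if i = 0 then X₀ else if i = 1 then X₁ else if i = n - 1 then X else e.obj i
  have hO₀ : O 0 = X₀ := if_pos rfl
  have hO₁ : O 1 = X₁ := (if_neg (by omega)).trans (if_pos rfl)
  have hO : O (n - 1) = X := (if_neg (by omega)).trans ((if_neg (by omega)).trans (if_pos rfl))
  refine ⟨transport e O fun i =>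
    if h₀ : i = 0 then eqToIso (by rw [h₀, hO₀]) ≪≫ ι₀ ≪≫ eqToIso (by rw [h₀])
    else if h₁ : i = 1 then eqToIso (by rw [h₁, hO₁]) ≪≫ ι₁ ≪≫ eqToIso (by rw [h₁])
    else if h : i = n - 1 then eqToIso (by rw [h, hO]) ≪≫ ι ≪≫ eqToIso (by rw [h])
    else eqToIso (by simp only [O, if_neg h₀, if_neg h₁, if_neg h]),
    hAng.transport_mem he _ _, hO₀, hO₁, hO⟩

end

section rotation

variable {n : ℕ} {T : Type u} [Category.{v} T] [HasZeroObject T] {S : T ⥤ T}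

/-- Objects of the `k`-fold left rotation `A_{k+1} → ⋯ → Aₙ → ΣA₁ → ⋯ → ΣA_k` of an
`n`-`Σ`-sequence, meaningful for `1 ≤ k ≤ n - 1`; the junk objects are `0`. -/
noncomputable def rotObj (d : NSeq n T S) (k i : ℕ) : T :=
  if i + k ≤ n - 1 then d.obj (i + k)
  else if i ≤ n - 1 then S.obj (d.obj (i + k - n)) else 0

lemma rotObj_eq_obj {d : NSeq n T S} {k i j : ℕ} (h : i + k ≤ n - 1) (hj : i + k = j) :
    rotObj d k i = d.obj j := by
  subst hj; exact if_pos h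

lemma rotObj_eq_shift {d : NSeq n T S} {k i : ℕ} (hn : 1 ≤ n) (h1 : i ≤ n - 1)
    (h2 : n ≤ i + k) (j : ℕ) (hj : i + k - n = j) : rotObj d k i = S.obj (d.obj j) := by
  rw [rotObj, if_neg (by omega), if_pos h1, hj]

lemma rotObj_eq_zero {d : NSeq n T S} {k i : ℕ} (h : n - 1 < i) :
    rotObj d k i = 0 := by
  rw [rotObj, if_neg (by omega), if_neg (by omega)]

lemma rotObj_succ_eq (d : NSeq n T S) {k i : ℕ} (h : i + 2 ≤ n) :
    rotObj d (k + 1) i = rotObj d k (i + 1) := by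
  by_cases hc : i + (k + 1) ≤ n - 1
  · rw [rotObj_eq_obj hc rfl,
      rotObj_eq_obj (show i + 1 + k ≤ n - 1 by omega) (show i + 1 + k = i + (k + 1) by omega)]
  · rw [rotObj_eq_shift (by omega) (by omega) (by omega) (i + k + 1 - n) (by omega),
      rotObj_eq_shift (by omega) (by omega) (by omega) (i + k + 1 - n) (by omega)]

variable [Preadditive T]

@[reducible] noncomputable def rotLeft (hn : 3 ≤ n) (k : ℕ) (d : NSeq n T S) : NSeq n T S where
  obj := rotObj d k
  mor i :=
    if h1 : i + k ≤ n - 2 then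
      eqToHom (rotObj_eq_obj (by omega) rfl) ≫ d.mor (i + k) ≫
        eqToHom (rotObj_eq_obj (show i + 1 + k ≤ n - 1 by omega) (by omega)).symm
    else if h2 : i + k = n - 1 ∧ i ≤ n - 2 then
      eqToHom (rotObj_eq_obj (by omega) h2.1) ≫ d.phantom ≫
        eqToHom (rotObj_eq_shift (by omega) (by omega) (by omega) 0 (by omega)).symm
    else if h3 : i ≤ n - 2 ∧ n ≤ i + k then
      eqToHom (rotObj_eq_shift (by omega) (by omega) (by omega) (i + k - n) rfl) ≫
        (((-1 : ℤ) ^ n) • S.map (d.mor (i + k - n))) ≫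
        eqToHom (rotObj_eq_shift (by omega) (show i + 1 ≤ n - 1 by omega) (by omega)
          (i + k - n + 1) (by omega)).symm
    else 0
  phantom :=
    if hk : 1 ≤ k ∧ k ≤ n - 1 then
      eqToHom (rotObj_eq_shift (by omega) (by omega) (by omega) (k - 1) (by omega)) ≫
        (((-1 : ℤ) ^ n) • S.map (d.mor (k - 1))) ≫
        eqToHom (congrArg S.obj (rotObj_eq_obj (show 0 + k ≤ n - 1 by omega)
          (show 0 + k = k - 1 + 1 by omega)).symm)
    else 0

section

variable (hn : 3 ≤ n) (d : NSeq n T S)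

lemma rotLeft_mor_of_lt {k i j : ℕ} (h : i + k ≤ n - 2) (hj : i + k = j) :
    (rotLeft hn k d).mor i =
      eqToHom (rotObj_eq_obj (by omega) hj) ≫ d.mor j ≫
        eqToHom (rotObj_eq_obj (show i + 1 + k ≤ n - 1 by omega) (by omega)).symm := by
  subst hj
  exact dif_pos h

lemma rotLeft_mor_eq_phantom {k i : ℕ} (h1 : i + k = n - 1) (h2 : i ≤ n - 2) :
    (rotLeft hn k d).mor i =
      eqToHom (rotObj_eq_obj (by omega) h1) ≫ d.phantom ≫
        eqToHom (rotObj_eq_shift (by omega) (by omega) (by omega) 0 (by omega)).symm :=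
  (dif_neg (by omega)).trans (dif_pos ⟨h1, h2⟩)

lemma rotLeft_mor_of_ge {k i j : ℕ} (h1 : i ≤ n - 2) (h2 : n ≤ i + k) (hj : i + k - n = j) :
    (rotLeft hn k d).mor i =
      eqToHom (rotObj_eq_shift (by omega) (by omega) (by omega) j hj) ≫
        (((-1 : ℤ) ^ n) • S.map (d.mor j)) ≫
        eqToHom (rotObj_eq_shift (by omega) (show i + 1 ≤ n - 1 by omega) (by omega)
          (j + 1) (by omega)).symm := by
  subst hj
  exact (dif_neg (by omega)).trans ((dif_neg (by omega)).trans (dif_pos ⟨h1, h2⟩))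

lemma rotLeft_phantom {k j : ℕ} (hk1 : 1 ≤ k) (hk2 : k ≤ n - 1) (hj : k - 1 = j) :
    (rotLeft hn k d).phantom =
      eqToHom (rotObj_eq_shift (by omega) (by omega) (by omega) j (by omega)) ≫
        (((-1 : ℤ) ^ n) • S.map (d.mor j)) ≫
        eqToHom (congrArg S.obj (rotObj_eq_obj (show 0 + k ≤ n - 1 by omega)
          (show 0 + k = j + 1 by omega)).symm) := by
  subst hj
  exact dif_pos ⟨hk1, hk2⟩

lemma isZero_rotLeft_obj {k i : ℕ} (h : n ≤ i) : IsZero ((rotLeft hn k d).obj i) := by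
  rw [show (rotLeft hn k d).obj i = 0 from rotObj_eq_zero (by omega)]
  exact isZero_zero T

lemma isLeftRotation_rotLeft_one : IsLeftRotation d (rotLeft hn 1 d) where
  hn := hn
  obj_eq _ _ := rotObj_eq_obj (by omega) rfl
  obj_last := rotObj_eq_shift (by omega) (by omega) (by omega) 0 (by omega)
  mor_eq _ _ := by rw [rotLeft_mor_of_lt hn d (by omega) rfl]
  mor_last := by rw [rotLeft_mor_eq_phantom hn d (by omega) (by omega)]
  phantom_eq := by rw [rotLeft_phantom hn d le_rfl (by omega) rfl]

lemma isLeftRotation_rotLeft_succ {k : ℕ} (hk1 : 1 ≤ k) (hk2 : k + 1 ≤ n - 1) :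
    IsLeftRotation (rotLeft hn k d) (rotLeft hn (k + 1) d) where
  hn := hn
  obj_eq _ h := rotObj_succ_eq d h
  obj_last := (rotObj_eq_shift (by omega) (by omega) (by omega) k (by omega)).trans
    (congrArg S.obj (rotObj_eq_obj (by omega) (show 0 + k = k by omega)).symm)
  mor_eq i h3 := by
    by_cases hc1 : i + (k + 1) ≤ n - 2
    · rw [rotLeft_mor_of_lt hn d hc1 rfl,
        rotLeft_mor_of_lt hn d (show i + 1 + k ≤ n - 2 by omega)
          (show i + 1 + k = i + (k + 1) by omega)]
      simp
    · by_cases hc2 : i + (k + 1) = n - 1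
      · rw [rotLeft_mor_eq_phantom hn d hc2 (by omega),
          rotLeft_mor_eq_phantom hn d (show i + 1 + k = n - 1 by omega) (by omega)]
        simp
      · rw [rotLeft_mor_of_ge hn d (by omega) (by omega) rfl,
          rotLeft_mor_of_ge hn d (show i + 1 ≤ n - 2 by omega) (by omega)
            (show i + 1 + k - n = i + (k + 1) - n by omega)]
        simp
  mor_last := by
    rw [rotLeft_mor_of_ge hn d (by omega) (by omega) (show n - 2 + (k + 1) - n = k - 1 by omega),
      rotLeft_phantom hn d hk1 (by omega) rfl]
    simp
  phantom_eq := by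
    rw [rotLeft_phantom hn d (by omega) (by omega) (show k + 1 - 1 = k by omega),
      rotLeft_mor_of_lt hn d (show 0 + k ≤ n - 2 by omega) (show 0 + k = k by omega)]
    simp only [Functor.map_comp, eqToHom_map, Preadditive.comp_zsmul, Preadditive.zsmul_comp,
      Category.assoc, eqToHom_trans, eqToHom_trans_assoc]

end

variable [HasBinaryBiproducts T]

lemma IsNAngulated.rotLeft_mem_iff {Ang : Set (NSeq n T S)} (hAng : IsNAngulated Ang) (hn : 3 ≤ n)
    (d : NSeq n T S) {k : ℕ} (hk1 : 1 ≤ k) (hk2 : k ≤ n - 1) :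
    rotLeft hn k d ∈ Ang ↔ d ∈ Ang := by
  induction k with
  | zero => omega
  | succ k ih =>
    rcases Nat.eq_zero_or_pos k with rfl | hk
    · exact (hAng.rotate _ _ (isLeftRotation_rotLeft_one hn d)).symm
    · exact (hAng.rotate _ _ (isLeftRotation_rotLeft_succ hn d hk hk2)).symm.trans
        (ih hk (by omega))

end rotation

section unrotHom

variable {n : ℕ} {T : Type u} [Category.{v} T] [Preadditive T] [HasZeroObject T] {S : T ⥤ T}
  [S.IsEquivalence]

section

variable (hn : 3 ≤ n) {x y : NSeq n T S}
  (ψ : NSeqHom (rotLeft hn (n - 1) x) (rotLeft hn (n - 1) y))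

/-- The components of the morphism `x ⟶ y` underlying a morphism `ψ` between the
`(n-1)`-fold rotations `Aₙ → ΣA₁ → ⋯ → ΣA_{n-1}`. -/
noncomputable def unrotApp (i : ℕ) : x.obj i ⟶ y.obj i :=
  if h : i ≤ n - 2 then
    S.preimage
      (eqToHom (rotObj_eq_shift (by omega) (by omega) (by omega) i (by omega) :
          rotObj x (n - 1) (i + 1) = S.obj (x.obj i)).symm ≫ ψ.app (i + 1) ≫
        eqToHom (rotObj_eq_shift (by omega) (by omega) (by omega) i (by omega) :
          rotObj y (n - 1) (i + 1) = S.obj (y.obj i)))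
  else if h2 : i = n - 1 then
    eqToHom ((rotObj_eq_obj (by omega) (by omega) : rotObj x (n - 1) 0 = x.obj i)).symm ≫
      ψ.app 0 ≫ eqToHom (rotObj_eq_obj (by omega) (by omega) : rotObj y (n - 1) 0 = y.obj i)
  else 0

lemma map_unrotApp {i j : ℕ} (h : i ≤ n - 2) (hj : i + 1 = j) :
    S.map (unrotApp hn ψ i) =
      eqToHom (rotObj_eq_shift (by omega) (by omega) (by omega) i (by omega) :
          rotObj x (n - 1) j = S.obj (x.obj i)).symm ≫ ψ.app j ≫
        eqToHom (rotObj_eq_shift (by omega) (by omega) (by omega) i (by omega) :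
          rotObj y (n - 1) j = S.obj (y.obj i)) := by
  subst hj
  rw [unrotApp, dif_pos h, Functor.map_preimage]

lemma unrotApp_of_eq {j : ℕ} (hj : j = n - 1) :
    unrotApp hn ψ j =
      eqToHom ((rotObj_eq_obj (by omega) (by omega) : rotObj x (n - 1) 0 = x.obj j)).symm ≫
        ψ.app 0 ≫
        eqToHom (rotObj_eq_obj (by omega) (by omega) : rotObj y (n - 1) 0 = y.obj j) := by
  rw [unrotApp, dif_neg (by omega), dif_pos hj]

lemma unrotApp_comm_of_lt {i : ℕ} (h : i + 3 ≤ n) :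
    unrotApp hn ψ i ≫ y.mor i = x.mor i ≫ unrotApp hn ψ (i + 1) := by
  apply S.map_injective
  have hc := ψ.comm (i + 1) (by omega)
  rw [rotLeft_mor_of_ge hn y (show i + 1 ≤ n - 2 by omega) (by omega)
        (show i + 1 + (n - 1) - n = i by omega),
      rotLeft_mor_of_ge hn x (show i + 1 ≤ n - 2 by omega) (by omega)
        (show i + 1 + (n - 1) - n = i by omega)] at hc
  simp only [Preadditive.comp_zsmul, Preadditive.zsmul_comp, Category.assoc] at hc
  rw [S.map_comp, S.map_comp, map_unrotApp hn ψ (by omega) rfl,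
    map_unrotApp hn ψ (by omega) rfl]
  rw [← cancel_epi (eqToHom (rotObj_eq_shift (by omega) (by omega) (by omega) i (by omega) :
      rotObj x (n - 1) (i + 1) = S.obj (x.obj i))),
    ← cancel_mono (eqToHom (rotObj_eq_shift (by omega) (by omega) (by omega) (i + 1)
      (by omega) : rotObj y (n - 1) (i + 1 + 1) = S.obj (y.obj (i + 1))).symm)]
  simpa only [Category.assoc, eqToHom_trans, eqToHom_trans_assoc, eqToHom_refl,
    Category.id_comp, Category.comp_id] using eq_of_neg_one_pow_zsmul_eq hc

lemma unrotApp_comm_of_eq {i : ℕ} (h : i = n - 2) :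
    unrotApp hn ψ i ≫ y.mor i = x.mor i ≫ unrotApp hn ψ (i + 1) := by
  subst h
  apply S.map_injective
  have hc := ψ.comm_phantom
  rw [rotLeft_phantom hn y (by omega) (by omega) (show n - 1 - 1 = n - 2 by omega),
    rotLeft_phantom hn x (by omega) (by omega) (show n - 1 - 1 = n - 2 by omega)] at hc
  simp only [Preadditive.comp_zsmul, Preadditive.zsmul_comp, Category.assoc] at hc
  rw [S.map_comp, S.map_comp, map_unrotApp hn ψ (by omega) (show n - 2 + 1 = n - 1 by omega),
    unrotApp_of_eq hn ψ (by omega)]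
  rw [← cancel_epi (eqToHom (rotObj_eq_shift (by omega) (by omega) (by omega) (n - 2)
      (by omega) : rotObj x (n - 1) (n - 1) = S.obj (x.obj (n - 2)))),
    ← cancel_mono (eqToHom (congrArg S.obj
      (rotObj_eq_obj (by omega) (by omega) : rotObj y (n - 1) 0 = y.obj (n - 2 + 1))).symm)]
  simpa only [Category.assoc, eqToHom_trans, eqToHom_trans_assoc, eqToHom_refl,
    Category.id_comp, Category.comp_id, Functor.map_comp, eqToHom_map]
    using eq_of_neg_one_pow_zsmul_eq hc

lemma unrotApp_comm_phantom :
    unrotApp hn ψ (n - 1) ≫ y.phantom = x.phantom ≫ S.map (unrotApp hn ψ 0) := by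
  have hc := ψ.comm 0 (by omega)
  rw [rotLeft_mor_eq_phantom hn y (show 0 + (n - 1) = n - 1 by omega) (by omega),
    rotLeft_mor_eq_phantom hn x (show 0 + (n - 1) = n - 1 by omega) (by omega)] at hc
  rw [unrotApp_of_eq hn ψ rfl, map_unrotApp hn ψ (by omega) rfl]
  rw [← cancel_epi (eqToHom
      (rotObj_eq_obj (by omega) (by omega) : rotObj x (n - 1) 0 = x.obj (n - 1))),
    ← cancel_mono (eqToHom (rotObj_eq_shift (by omega) (by omega) (by omega) 0 (by omega) :
      rotObj y (n - 1) (0 + 1) = S.obj (y.obj 0)).symm)]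
  simpa only [Category.assoc, eqToHom_trans, eqToHom_trans_assoc, eqToHom_refl,
    Category.id_comp, Category.comp_id] using hc

noncomputable def unrotHom : NSeqHom x y where
  app := unrotApp hn ψ
  comm i h := if h3 : i + 3 ≤ n then unrotApp_comm_of_lt hn ψ h3
    else unrotApp_comm_of_eq hn ψ (by omega)
  comm_phantom := unrotApp_comm_phantom hn ψ

end

variable [HasBinaryBiproducts T]

/-- (F3) transported through `n - 1` rotations to the last two positions. -/
lemma IsNAngulated.exists_hom_of_phantom_square {Ang : Set (NSeq n T S)}
    (hAng : IsNAngulated Ang) (hn : 3 ≤ n) {x y : NSeq n T S} (hx : x ∈ Ang) (hy : y ∈ Ang)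
    (f₀ : x.obj (n - 1) ⟶ y.obj (n - 1)) (f₁ : S.obj (x.obj 0) ⟶ S.obj (y.obj 0))
    (hsq : f₀ ≫ y.phantom = x.phantom ≫ f₁) :
    ∃ φ : NSeqHom x y, φ.app (n - 1) = f₀ ∧ S.map (φ.app 0) = f₁ := by
  have ex : rotObj x (n - 1) 0 = x.obj (n - 1) := rotObj_eq_obj (by omega) (by omega)
  have ey : rotObj y (n - 1) 0 = y.obj (n - 1) := rotObj_eq_obj (by omega) (by omega)
  have ex' : rotObj x (n - 1) (0 + 1) = S.obj (x.obj 0) :=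
    rotObj_eq_shift (by omega) (by omega) (by omega) 0 (by omega)
  have ey' : rotObj y (n - 1) (0 + 1) = S.obj (y.obj 0) :=
    rotObj_eq_shift (by omega) (by omega) (by omega) 0 (by omega)
  obtain ⟨ψ, hψ₀, hψ₁, -⟩ := hAng.fill _ _
    ((hAng.rotLeft_mem_iff hn x (by omega) le_rfl).2 hx)
    ((hAng.rotLeft_mem_iff hn y (by omega) le_rfl).2 hy)
    (eqToHom ex ≫ f₀ ≫ eqToHom ey.symm) (eqToHom ex' ≫ f₁ ≫ eqToHom ey'.symm) (by
      rw [rotLeft_mor_eq_phantom hn y (show 0 + (n - 1) = n - 1 by omega) (by omega),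
        rotLeft_mor_eq_phantom hn x (show 0 + (n - 1) = n - 1 by omega) (by omega)]
      simp only [Category.assoc, eqToHom_trans_assoc, eqToHom_refl, Category.id_comp,
        reassoc_of% hsq])
  refine ⟨unrotHom hn ψ, ?_, ?_⟩
  · simp [unrotHom, unrotApp_of_eq hn ψ rfl, hψ₀]
  · simp [unrotHom, map_unrotApp hn ψ (by omega) (show 0 + 1 = 1 by omega), hψ₁]

end unrotHom

section tail

variable {n : ℕ} {T : Type u} [Category.{v} T] [HasZeroObject T] {S : T ⥤ T}

noncomputable def tailObj (n : ℕ) (Z : T) (i : ℕ) : T :=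
  if n - 2 ≤ i ∧ i ≤ n - 1 then Z else 0

lemma tailObj_of_le {Z : T} {i : ℕ} (h1 : n - 2 ≤ i) (h2 : i ≤ n - 1) :
    tailObj n Z i = Z := if_pos ⟨h1, h2⟩

lemma tailObj_of_lt {Z : T} {i : ℕ} (h : i < n - 2) : tailObj n Z i = 0 := if_neg (by omega)

variable [Preadditive T]

lemma trivialNSeq_obj_of_two_le {A₀ : T} {i : ℕ} (h : 2 ≤ i) :
    (trivialNSeq A₀ : NSeq n T S).obj i = 0 := by
  obtain ⟨m, rfl⟩ : ∃ m, i = m + 2 := ⟨i - 2, by omega⟩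
  rfl

lemma isZero_obj_zero [S.IsEquivalence] : IsZero (S.obj (0 : T)) :=
  S.map_isZero (isZero_zero T)

/-- The `n`-`Σ`-sequence `0 → ⋯ → 0 → Z = Z → Σ0`, a rotation of `trivialNSeq Z`. -/
@[reducible] noncomputable def tailNSeq (hn : 3 ≤ n) (Z : T) : NSeq n T S where
  obj := tailObj n Z
  mor i := if h : i = n - 2 then
      eqToHom ((tailObj_of_le (by omega) (by omega)).trans
        (tailObj_of_le (show n - 2 ≤ i + 1 by omega) (by omega)).symm)
    else 0
  phantom := 0

variable [HasBinaryBiproducts T]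

lemma IsNAngulated.tailNSeq_mem [S.IsEquivalence] {Ang : Set (NSeq n T S)} (hAng : IsNAngulated Ang)
    (hn : 3 ≤ n) (Z : T) : tailNSeq hn Z ∈ Ang := by
  rw [← hAng.rotLeft_mem_iff hn _ (show 1 ≤ n - 2 by omega) (by omega)]
  set R := rotLeft hn (n - 2) (tailNSeq (S := S) hn Z)
  have hR₀ : R.obj 0 = Z :=
    (rotObj_eq_obj (by omega) (show 0 + (n - 2) = n - 2 by omega)).trans
      (tailObj_of_le le_rfl (by omega))
  have hR₁ : R.obj 1 = Z :=
    (rotObj_eq_obj (by omega) (show 1 + (n - 2) = n - 1 by omega)).trans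
      (tailObj_of_le (by omega) le_rfl)
  have hR : ∀ i, 2 ≤ i → i < n → IsZero (R.obj i) := fun i h₂ h₃ => by
    rw [show R.obj i = _ from rotObj_eq_shift (by omega) (by omega) (by omega) (i - 2) (by omega),
      show (tailNSeq (S := S) hn Z).obj (i - 2) = 0 from tailObj_of_lt (by omega)]
    exact isZero_obj_zero
  have htriv : ∀ i, 2 ≤ i → IsZero ((trivialNSeq Z : NSeq n T S).obj i) := fun i h => by
    rw [trivialNSeq_obj_of_two_le h]
    exact isZero_zero T
  refine hAng.mem_of_iso_of_isZero (by omega) (hAng.trivial_mem Z)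
    (fun _ hi => isZero_rotLeft_obj hn _ hi)
    (fun i hi =>
      if h₀ : i = 0 then eqToIso (by subst h₀; exact hR₀)
      else if h₁ : i = 1 then eqToIso (by subst h₁; exact hR₁)
      else (hR i (by omega) hi).iso (htriv i (by omega))) (fun i h => ?_) ?_
  · rcases Nat.eq_zero_or_pos i with rfl | hi
    · simp [R, trivialNSeq]
    · exact (htriv (i + 1) (by omega)).eq_of_tgt _ _
  · exact (hR (n - 1) (by omega) (by omega)).eq_of_src _ _

lemma IsNAngulated.exists_comp_mor_eq_of_comp_phantom_eq_zero [S.IsEquivalence]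
    {Ang : Set (NSeq n T S)} (hAng : IsNAngulated Ang) (hn : 3 ≤ n) {d : NSeq n T S}
    (hd : d ∈ Ang) {X : T} (f : X ⟶ d.obj (n - 1)) (hf : f ≫ d.phantom = 0) :
    ∃ g : X ⟶ d.obj (n - 2),
      g ≫ d.mor (n - 2) ≫ eqToHom (congrArg d.obj (show n - 2 + 1 = n - 1 by omega)) = f := by
  have hX : tailObj n X (n - 1) = X := tailObj_of_le (by omega) le_rfl
  obtain ⟨φ, hφ, -⟩ := hAng.exists_hom_of_phantom_square hn (hAng.tailNSeq_mem hn X) hd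
    (eqToHom hX ≫ f) 0 (by rw [Category.assoc, hf, comp_zero, comp_zero])
  have hX' : (tailNSeq (S := S) hn X).obj (n - 2) = X := tailObj_of_le le_rfl (by omega)
  refine ⟨eqToHom hX'.symm ≫ φ.app (n - 2), ?_⟩
  rw [Category.assoc, reassoc_of% (φ.comm (n - 2) (by omega)), φ.app_congr
    (show n - 2 + 1 = n - 1 by omega), hφ]
  simp [tailNSeq]

lemma IsNAngulated.exists_mor_comp_eq_of_phantom_comp_eq_zero [S.IsEquivalence]
    {Ang : Set (NSeq n T S)} (hAng : IsNAngulated Ang) (hn : 3 ≤ n) {d : NSeq n T S}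
    (hd : d ∈ Ang) {Y : T} (g : d.obj 0 ⟶ Y) (hg : d.phantom ≫ S.map g = 0) :
    ∃ g' : d.obj 1 ⟶ Y, d.mor 0 ≫ g' = g := by
  obtain ⟨φ, -, hφ⟩ := hAng.exists_hom_of_phantom_square hn hd (hAng.trivial_mem Y) 0
    (S.map g) (by rw [zero_comp]; exact hg.symm)
  refine ⟨φ.app 1, ?_⟩
  have h := φ.comm 0 (by omega)
  rw [S.map_injective hφ] at h
  exact h.symm.trans (Category.comp_id g)

end tail

section unrotSeq

variable {n : ℕ} {T : Type u} [Category.{v} T] {S : T ⥤ T} [S.IsEquivalence]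

section

variable (c : NSeq n T S) (B : T)

/-- Objects of `B → Σ⁻¹c₂ → ⋯ → Σ⁻¹c_{n-1} → c₀`, whose `(n-1)`-fold left rotation is
isomorphic to `c` when `c₁ = ΣB`. -/
noncomputable def unrotObj (i : ℕ) : T :=
  if i = 0 then B else if i = n - 1 then c.obj 0 else S.objPreimage (c.obj (i + 1))

lemma unrotObj_zero : unrotObj c B 0 = B := if_pos rfl

lemma unrotObj_last (hn : 2 ≤ n) : unrotObj c B (n - 1) = c.obj 0 := by
  rw [unrotObj, if_neg (by omega), if_pos rfl]

lemma unrotObj_of_le {i j : ℕ} (h₁ : 1 ≤ i) (h₂ : i ≤ n - 2) (hj : i + 1 = j) :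
    unrotObj c B i = S.objPreimage (c.obj j) := by
  subst hj; rw [unrotObj, if_neg (by omega), if_neg (by omega)]

end

variable [Preadditive T] {c : NSeq n T S} {B : T} (hn : 3 ≤ n) (h₁ : c.obj 1 = S.obj B)

/-- The signs make the `(n-1)`-fold rotation, which applies `(-1)ⁿ Σ` to these morphisms,
agree with `c`. -/
@[reducible] noncomputable def unrotSeq : NSeq n T S where
  obj := unrotObj c B
  mor i :=
    if h₀ : i = 0 then
      eqToHom ((congrArg (unrotObj c B) h₀).trans (unrotObj_zero c B)) ≫
        S.preimage (((-1 : ℤ) ^ n) •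
          (eqToHom h₁.symm ≫ c.mor 1 ≫ (S.objObjPreimageIso (c.obj 2)).inv)) ≫
        eqToHom (unrotObj_of_le c B (by omega) (by omega) (by omega)).symm
    else if h : i + 1 ≤ n - 2 then
      eqToHom (unrotObj_of_le c B (by omega) (by omega) rfl) ≫
        S.preimage (((-1 : ℤ) ^ n) • ((S.objObjPreimageIso (c.obj (i + 1))).hom ≫
          c.mor (i + 1) ≫ (S.objObjPreimageIso (c.obj (i + 1 + 1))).inv)) ≫
        eqToHom (unrotObj_of_le c B (by omega) h rfl).symm
    else if hl : i = n - 2 then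
      eqToHom (unrotObj_of_le c B (by omega) (by omega) (show i + 1 = n - 1 by omega)) ≫
        S.preimage (((-1 : ℤ) ^ n) •
          ((S.objObjPreimageIso (c.obj (n - 1))).hom ≫ c.phantom)) ≫
        eqToHom ((congrArg (unrotObj c B) (show i + 1 = n - 1 by omega)).trans
          (unrotObj_last c B (by omega))).symm
    else 0
  phantom := eqToHom (unrotObj_last c B (by omega)) ≫ c.mor 0 ≫
    eqToHom (h₁.trans (congrArg S.obj (unrotObj_zero c B).symm))

lemma unrotSeq_mor_zero : (unrotSeq hn h₁).mor 0 =
    eqToHom (unrotObj_zero c B) ≫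
      S.preimage (((-1 : ℤ) ^ n) •
        (eqToHom h₁.symm ≫ c.mor 1 ≫ (S.objObjPreimageIso (c.obj 2)).inv)) ≫
      eqToHom (unrotObj_of_le c B (i := 0 + 1) (by omega) (by omega) rfl).symm := by
  simp only [unrotSeq, dif_pos]

lemma unrotSeq_mor_of_le {i : ℕ} (h₀ : 1 ≤ i) (h : i + 1 ≤ n - 2) :
    (unrotSeq hn h₁).mor i =
    eqToHom (unrotObj_of_le c B (by omega) (by omega) rfl) ≫
      S.preimage (((-1 : ℤ) ^ n) • ((S.objObjPreimageIso (c.obj (i + 1))).hom ≫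
        c.mor (i + 1) ≫ (S.objObjPreimageIso (c.obj (i + 1 + 1))).inv)) ≫
      eqToHom (unrotObj_of_le c B (by omega) h rfl).symm :=
  (dif_neg (by omega)).trans (dif_pos h)

lemma unrotSeq_mor_last : (unrotSeq hn h₁).mor (n - 2) =
    eqToHom (unrotObj_of_le c B (by omega) (by omega) (show n - 2 + 1 = n - 1 by omega)) ≫
      S.preimage (((-1 : ℤ) ^ n) •
        ((S.objObjPreimageIso (c.obj (n - 1))).hom ≫ c.phantom)) ≫
      eqToHom ((congrArg (unrotObj c B) (show n - 2 + 1 = n - 1 by omega)).trans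
        (unrotObj_last c B (by omega))).symm :=
  (dif_neg (by omega)).trans ((dif_neg (by omega)).trans (dif_pos rfl))

variable [HasZeroObject T]

lemma rotLeft_unrotSeq_obj_zero : (rotLeft hn (n - 1) (unrotSeq hn h₁)).obj 0 = c.obj 0 :=
  (rotObj_eq_obj (by omega) (show 0 + (n - 1) = n - 1 by omega)).trans
    (unrotObj_last c B (by omega))

lemma rotLeft_unrotSeq_obj_one : (rotLeft hn (n - 1) (unrotSeq hn h₁)).obj 1 = c.obj 1 :=
  ((rotObj_eq_shift (by omega) (by omega) (by omega) 0 (by omega)).trans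
    (congrArg S.obj (unrotObj_zero c B))).trans h₁.symm

lemma rotLeft_unrotSeq_obj_of_two_le {i : ℕ} (h₂ : 2 ≤ i) (h₃ : i ≤ n - 1) :
    (rotLeft hn (n - 1) (unrotSeq hn h₁)).obj i = S.obj (S.objPreimage (c.obj i)) :=
  (rotObj_eq_shift (by omega) (by omega) (by omega) (i - 1) (by omega)).trans
    (congrArg S.obj (unrotObj_of_le c B (by omega) (by omega) (by omega)))

lemma rotLeft_unrotSeq_mor_zero : (rotLeft hn (n - 1) (unrotSeq hn h₁)).mor 0 =
    eqToHom (rotLeft_unrotSeq_obj_zero hn h₁) ≫ c.mor 0 ≫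
      eqToHom (rotLeft_unrotSeq_obj_one hn h₁).symm := by
  rw [rotLeft_mor_eq_phantom hn _ (show 0 + (n - 1) = n - 1 by omega) (by omega)]
  simp [unrotSeq]

lemma rotLeft_unrotSeq_mor_one : (rotLeft hn (n - 1) (unrotSeq hn h₁)).mor 1 =
    eqToHom (rotLeft_unrotSeq_obj_one hn h₁) ≫ c.mor 1 ≫
      (S.objObjPreimageIso (c.obj 2)).inv ≫
      eqToHom (rotLeft_unrotSeq_obj_of_two_le hn h₁ le_rfl (by omega)).symm := by
  rw [rotLeft_mor_of_ge hn _ (by omega) (by omega) (show 1 + (n - 1) - n = 0 by omega),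
    unrotSeq_mor_zero]
  simp only [Functor.map_comp, eqToHom_map, Functor.map_preimage, Preadditive.comp_zsmul,
    Preadditive.zsmul_comp, neg_one_pow_zsmul_neg_one_pow_zsmul, Category.assoc, eqToHom_trans,
    eqToHom_trans_assoc]

lemma rotLeft_unrotSeq_mor_of_two_le {i : ℕ} (h₂ : 2 ≤ i) (h₃ : i ≤ n - 2) :
    (rotLeft hn (n - 1) (unrotSeq hn h₁)).mor i =
      eqToHom (rotLeft_unrotSeq_obj_of_two_le hn h₁ h₂ (by omega)) ≫
        (S.objObjPreimageIso (c.obj i)).hom ≫ c.mor i ≫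
        (S.objObjPreimageIso (c.obj (i + 1))).inv ≫
        eqToHom (rotLeft_unrotSeq_obj_of_two_le hn h₁ (by omega) (by omega)).symm := by
  obtain ⟨m, rfl⟩ : ∃ m, i = m + 1 := ⟨i - 1, by omega⟩
  rw [rotLeft_mor_of_ge hn _ (by omega) (by omega) (show m + 1 + (n - 1) - n = m by omega),
    unrotSeq_mor_of_le hn h₁ (by omega) (by omega)]
  simp only [Functor.map_comp, eqToHom_map, Functor.map_preimage, Preadditive.comp_zsmul,
    Preadditive.zsmul_comp, neg_one_pow_zsmul_neg_one_pow_zsmul, Category.assoc, eqToHom_trans,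
    eqToHom_trans_assoc]

lemma rotLeft_unrotSeq_phantom : (rotLeft hn (n - 1) (unrotSeq hn h₁)).phantom =
    eqToHom (rotLeft_unrotSeq_obj_of_two_le hn h₁ (by omega) le_rfl) ≫
      (S.objObjPreimageIso (c.obj (n - 1))).hom ≫ c.phantom ≫
      eqToHom (congrArg S.obj (rotLeft_unrotSeq_obj_zero hn h₁).symm) := by
  rw [rotLeft_phantom hn _ (by omega) (by omega) (show n - 1 - 1 = n - 2 by omega),
    unrotSeq_mor_last]
  simp only [Functor.map_comp, eqToHom_map, Functor.map_preimage, Preadditive.comp_zsmul,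
    Preadditive.zsmul_comp, neg_one_pow_zsmul_neg_one_pow_zsmul, Category.assoc, eqToHom_trans,
    eqToHom_trans_assoc]

variable [HasBinaryBiproducts T]

lemma IsNAngulated.rotLeft_unrotSeq_mem {Ang : Set (NSeq n T S)} (hAng : IsNAngulated Ang)
    (hc : c ∈ Ang) : rotLeft hn (n - 1) (unrotSeq hn h₁) ∈ Ang := by
  refine hAng.mem_of_iso_of_isZero (by omega) hc
    (fun _ hi => isZero_rotLeft_obj hn _ hi)
    (fun i hi =>
      if h₀ : i = 0 then eqToIso (by subst h₀; exact rotLeft_unrotSeq_obj_zero hn h₁)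
      else if h₁' : i = 1 then eqToIso (by subst h₁'; exact rotLeft_unrotSeq_obj_one hn h₁)
      else eqToIso (rotLeft_unrotSeq_obj_of_two_le hn h₁ (by omega) (by omega)) ≪≫
        S.objObjPreimageIso (c.obj i)) ?_ ?_
  · intro i h
    rcases Nat.lt_trichotomy i 1 with hi | rfl | hi
    · obtain rfl : i = 0 := by omega
      rw [dif_pos rfl, dif_neg (by omega), dif_pos rfl, rotLeft_unrotSeq_mor_zero]
      simp
    · rw [dif_neg (by omega), dif_pos rfl, dif_neg (by omega), dif_neg (by omega),
        rotLeft_unrotSeq_mor_one]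
      simp
    · rw [dif_neg (by omega), dif_neg (by omega), dif_neg (by omega), dif_neg (by omega),
        rotLeft_unrotSeq_mor_of_two_le hn h₁ (by omega) (by omega)]
      simp
  · rw [dif_neg (by omega), dif_neg (by omega), dif_pos rfl, rotLeft_unrotSeq_phantom]
    simp [eqToHom_map]

end unrotSeq

section almostExact

variable {n : ℕ} {T : Type u} [Category.{v} T] [Preadditive T] [HasZeroObject T]
  [HasBinaryBiproducts T] {S : T ⥤ T} [S.IsEquivalence] {Ang : Set (NSeq n T S)} {A : Set T}
  {E : Set (NSeq n T S)}

lemma IsNAngulated.exists_mem_phantom_eq (hAng : IsNAngulated Ang) (hn : 3 ≤ n) {X B : T}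
    (p : X ⟶ S.obj B) :
    ∃ e ∈ Ang, ∃ (h₀ : e.obj 0 = B) (h₁ : e.obj (n - 1) = X),
      e.phantom = eqToHom h₁ ≫ p ≫ eqToHom (congrArg S.obj h₀).symm := by
  obtain ⟨c, hc, hc₀, hc₁, hp⟩ := hAng.complete p
  refine ⟨unrotSeq hn hc₁, (hAng.rotLeft_mem_iff hn _ (by omega) le_rfl).1
    (hAng.rotLeft_unrotSeq_mem hn hc₁ hc), unrotObj_zero c B,
    (unrotObj_last c B (by omega)).trans hc₀, ?_⟩
  simp [unrotSeq, hp]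

lemma IsNAngulated.exists_retract_obj_shift (hAng : IsNAngulated Ang) (hn : 3 ≤ n)
    (hA : ClosedUnderExtensions Ang A) {Z : T} (hZ : Z ∈ A) :
    ∃ W : T, S.obj W ∈ A ∧ ∃ (u : S.obj W ⟶ Z) (s : Z ⟶ S.obj W), s ≫ u = 𝟙 Z := by
  let big := biprodSeq (trivialNSeq Z) (tailNSeq (S := S) hn Z)
  have hbig : big ∈ Ang := hAng.biprod_mem _ _ (hAng.trivial_mem Z) (hAng.tailNSeq_mem hn Z)
  have htail : IsZero ((tailNSeq (S := S) hn Z).obj 0) := by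
    rw [show (tailNSeq (S := S) hn Z).obj 0 = 0 from tailObj_of_lt (by omega)]
    exact isZero_zero T
  have htriv : IsZero ((trivialNSeq Z : NSeq n T S).obj (n - 1)) := by
    rw [trivialNSeq_obj_of_two_le (by omega)]
    exact isZero_zero T
  -- `A` need not be closed under isomorphisms, so `ΣW ≅ big.obj 1` is put into `A` as the
  -- middle term of an `n`-angle whose two ends are `Z`
  let W := S.objPreimage (big.obj 1)
  obtain ⟨v, hv, hv₀, hv₁, hv'⟩ := hAng.exists_mem_obj_eq_of_iso hn hbig
    (Limits.isoBiprodZero htail) (S.objObjPreimageIso (big.obj 1))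
    (Limits.isoZeroBiprod htriv ≪≫ biprod.mapIso (Iso.refl _)
      (eqToIso (tailObj_of_le (by omega) le_rfl).symm))
  have hW : S.obj W ∈ A := hv₁ ▸ hA v hv (hv₀ ▸ hZ) (hv' ▸ hZ) 1 (by omega)
  let ι := S.objObjPreimageIso (big.obj 1)
  refine ⟨W, hW, ι.hom ≫ (biprod.fst : big.obj 1 ⟶ (trivialNSeq Z : NSeq n T S).obj 1),
    (biprod.inl : (trivialNSeq Z : NSeq n T S).obj 1 ⟶ big.obj 1) ≫ ι.inv, ?_⟩
  exact (Category.assoc _ _ _).trans ((congrArg _ (ι.inv_hom_id_assoc _)).trans biprod.inl_fst)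

lemma IsAlmostNExact.exists_base_change (hAng : IsNAngulated Ang) (hn : 3 ≤ n)
    (hA : ClosedUnderExtensions Ang A) (hE : IsAlmostNExact Ang A E) {d : NSeq n T S}
    (hd : d ∈ E) {V : T} (hV : V ∈ A) (u : V ⟶ d.obj (n - 1)) :
    ∃ e ∈ E, ∃ (h₀ : e.obj 0 = d.obj 0) (h₁ : e.obj (n - 1) = V),
      e.phantom = eqToHom h₁ ≫ u ≫ d.phantom ≫ eqToHom (congrArg S.obj h₀).symm := by
  obtain ⟨e, he, h₀, h₁, hph⟩ := hAng.exists_mem_phantom_eq hn (u ≫ d.phantom)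
  obtain ⟨φ, -, hφ⟩ := hAng.exists_hom_of_phantom_square hn he (hE.subset_DA hd).1
    (eqToHom h₁ ≫ u) (eqToHom (congrArg S.obj h₀)) (by simp [hph])
  have heA : e ∈ DA Ang A :=
    ⟨he, hA e he (by rw [h₀]; exact (hE.subset_DA hd).2 0 (by omega))
      (by rw [h₁]; exact hV)⟩
  refine ⟨e, hE.base_change d hd e heA φ h₀ (S.map_injective (by rw [hφ, eqToHom_map])),
    h₀, h₁, by simp [hph]⟩

lemma IsAlmostNExact.exists_cobase_change (hAng : IsNAngulated Ang) (hn : 3 ≤ n)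
    (hA : ClosedUnderExtensions Ang A) (hE : IsAlmostNExact Ang A E) {d : NSeq n T S}
    (hd : d ∈ E) {C : T} (hC : C ∈ A) (g : d.obj 0 ⟶ C) :
    ∃ e ∈ E, ∃ (h₀ : e.obj 0 = C) (h₁ : e.obj (n - 1) = d.obj (n - 1)),
      e.phantom =
        eqToHom h₁ ≫ d.phantom ≫ S.map g ≫ eqToHom (congrArg S.obj h₀).symm := by
  obtain ⟨e, he, h₀, h₁, hph⟩ := hAng.exists_mem_phantom_eq hn (d.phantom ≫ S.map g)
  obtain ⟨φ, hφ, -⟩ := hAng.exists_hom_of_phantom_square hn (hE.subset_DA hd).1 he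
    (eqToHom h₁.symm) (S.map g ≫ eqToHom (congrArg S.obj h₀).symm) (by simp [hph])
  have heA : e ∈ DA Ang A :=
    ⟨he, hA e he (by rw [h₀]; exact hC)
      (by rw [h₁]; exact (hE.subset_DA hd).2 (n - 1) (by omega))⟩
  exact ⟨e, hE.cobase_change d hd e heA φ h₁.symm hφ, h₀, h₁, by simp [hph]⟩

lemma IsAlmostNExact.phant_precomp (hAng : IsNAngulated Ang) (hn : 3 ≤ n)
    (hA : ClosedUnderExtensions Ang A) (hE : IsAlmostNExact Ang A E) {Z Y : T} {f : Z ⟶ Y}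
    (hf : phant E f) {X : T} (hX : X ∈ A) (u : X ⟶ Z) :
    phant E (u ≫ f) := by
  obtain ⟨d, hd, rfl, hYd, rfl⟩ := hf
  obtain ⟨e, he, h₀, h₁, hph⟩ := hE.exists_base_change hAng hn hA hd hX u
  exact ⟨e, he, h₁, (congrArg S.obj h₀).trans hYd, by simp [hph]⟩

end almostExact

section ideals

variable {n : ℕ} {T : Type u} [Category.{v} T] [Preadditive T] {S : T ⥤ T}
  {Ang : Set (NSeq n T S)} {A : Set T} {E : Set (NSeq n T S)}

lemma relPhant_PB_le_perpLeft_perpRight (I : MorphismProperty T) :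
    relPhant A E (PB E I) ≤ perpLeft A E (perpRight A E I) := by
  rintro X Z f ⟨hX, hZ, hf⟩
  refine ⟨hX, hZ, fun B Y m hm χ hχ => ?_⟩
  obtain ⟨e, ⟨-, C, i, ψ, hi, hψ, he⟩, hXe, hYe, hfχ⟩ := hf χ hχ
  have hψ' : phant E (ψ ≫ eqToHom hYe) := by simpa using phant_eqToHom_conj rfl hYe hψ
  calc f ≫ χ ≫ S.map m = eqToHom hXe.symm ≫ i ≫ (ψ ≫ eqToHom hYe) ≫ S.map m := by
        rw [← Category.assoc, hfχ, he]; simp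
    _ = 0 := by rw [hm.2.2 i hi _ hψ', comp_zero]

variable [HasZeroObject T] [HasBinaryBiproducts T]

lemma le_relPhant_PB [S.IsEquivalence] (hAng : IsNAngulated Ang) (hn : 3 ≤ n)
    (hA : ClosedUnderExtensions Ang A) (hE : IsAlmostNExact Ang A E) {I : MorphismProperty T}
    (hI : IsIdeal A I) : I ≤ relPhant A E (PB E I) := by
  intro X Z f hf
  refine ⟨hI.src_mem f hf, hI.tgt_mem f hf, fun B h hh => ?_⟩
  obtain ⟨d, hd, rfl, hYd, rfl⟩ := hh
  obtain ⟨e, he, h₀, h₁, hph⟩ := hE.exists_base_change hAng hn hA hd (hI.src_mem f hf) f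
  refine ⟨e, ⟨he, d.obj (n - 1), eqToHom h₁ ≫ f,
    d.phantom ≫ eqToHom (congrArg S.obj h₀).symm,
    ?_, ⟨d, hd, rfl, (congrArg S.obj h₀).symm, by simp⟩, by simp [hph]⟩,
    h₁, (congrArg S.obj h₀).trans hYd, by simp [hph]⟩
  simpa using hI.comp_mem (eqToHom h₁) f (𝟙 _) (by rw [h₁]; exact hI.src_mem f hf)
    (hI.tgt_mem f hf) hf

lemma perpLeft_perpRight_le_of_specialPrecovering [S.IsEquivalence] (hAng : IsNAngulated Ang)
    (hn : 3 ≤ n) (hEAng : E ⊆ Ang) {I : MorphismProperty T} (hI : IsIdeal A I)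
    (hsp : SpecialPrecovering A E I) : perpLeft A E (perpRight A E I) ≤ I := by
  rintro X Z f ⟨hX, hZ, hf⟩
  obtain ⟨_, _, hi, d, hd, rfl, rfl, rfl, B, φ, j, hφ, hj, hph⟩ := hsp Z hZ
  have hlast : d.obj (n - 1) = d.obj (n - 2 + 1) := congrArg d.obj (by omega)
  have hzero : (f ≫ eqToHom hlast.symm) ≫ d.phantom = 0 := by
    have h := hf j hj _ (by simpa using phant_eqToHom_conj hlast rfl hφ)
    rw [hph]
    simpa only [Category.assoc] using h
  obtain ⟨g, hg⟩ :=
    hAng.exists_comp_mor_eq_of_comp_phantom_eq_zero hn (hEAng hd) _ hzero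
  have hgf : g ≫ d.mor (n - 2) = f := by simpa using congrArg (· ≫ eqToHom hlast) hg
  simpa [hgf] using hI.comp_mem g _ (𝟙 _) hX hZ hi

lemma relCophant_PO_le_perpRight_perpLeft [S.IsEquivalence] (hAng : IsNAngulated Ang)
    (hn : 3 ≤ n) (hA : ClosedUnderExtensions Ang A) (hE : IsAlmostNExact Ang A E)
    (J : MorphismProperty T) : relCophant A E (PO E J) ≤ perpRight A E (perpLeft A E J) := by
  rintro Z Y g ⟨hZ, hY, hg⟩
  refine ⟨hZ, hY, fun X Z₀ m ⟨_, hZ₀, hm⟩ φ hφ => ?_⟩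
  -- `Φ^E` only tests phantoms out of objects `ΣW`: move `φ` to one of which `Z₀` is a retract
  obtain ⟨W, hW, u, s, hsu⟩ := hAng.exists_retract_obj_shift hn hA hZ₀
  obtain ⟨e, ⟨-, B, ψ, j, hψ, hj, he⟩, hXe, hYe, hge⟩ :=
    hg (S.preimage (u ≫ φ)) (by rw [S.map_preimage]; exact hE.phant_precomp hAng hn hA hφ hW u)
  have hsψ : phant E (s ≫ eqToHom hXe.symm ≫ ψ) :=
    hE.phant_precomp hAng hn hA (by simpa using phant_eqToHom_conj hXe rfl hψ) hZ₀ s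
  calc m ≫ φ ≫ S.map g = m ≫ s ≫ S.map (S.preimage (u ≫ φ) ≫ g) := by
        simp [reassoc_of% hsu]
    _ = (m ≫ (s ≫ eqToHom hXe.symm ≫ ψ) ≫ S.map j) ≫ eqToHom hYe := by rw [hge, he]; simp
    _ = 0 := by rw [hm j hj _ hsψ, zero_comp]

lemma le_relCophant_PO [S.IsEquivalence] (hAng : IsNAngulated Ang) (hn : 3 ≤ n)
    (hA : ClosedUnderExtensions Ang A) (hE : IsAlmostNExact Ang A E) {J : MorphismProperty T}
    (hJ : IsIdeal A J) : J ≤ relCophant A E (PO E J) := by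
  intro Z Y g hg
  refine ⟨hJ.src_mem g hg, hJ.tgt_mem g hg, fun W h ⟨d, hd, hXd, hYd, hh⟩ => ?_⟩
  have hd₀ : d.obj 0 ∈ A := (hE.subset_DA hd).2 0 (by omega)
  let g' : d.obj 0 ⟶ Y := S.preimage (eqToHom hYd ≫ S.map g)
  have hg' : J g' := by
    have : g' = S.preimage (eqToHom hYd) ≫ g ≫ 𝟙 Y := S.map_injective (by simp [g'])
    rw [this]
    exact hJ.comp_mem _ g _ hd₀ (hJ.tgt_mem g hg) hg
  obtain ⟨e, he, h₀, h₁, hph⟩ := hE.exists_cobase_change hAng hn hA hd (hJ.tgt_mem g hg) g'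
  refine ⟨e, ⟨he, d.obj 0, eqToHom h₁ ≫ d.phantom, g' ≫ eqToHom h₀.symm,
    ⟨d, hd, h₁.symm, rfl, by simp⟩, ?_, by simp only [hph, Functor.map_comp, eqToHom_map,
      Category.assoc]⟩, h₁.trans hXd, congrArg S.obj h₀, ?_⟩
  · simpa using hJ.comp_mem (𝟙 _) g' (eqToHom h₀.symm) hd₀
      (by rw [h₀]; exact hJ.tgt_mem g hg) hg'
  · rw [S.map_comp, hh, hph]
    simp [g']

lemma perpRight_perpLeft_le_of_specialPreenveloping [S.IsEquivalence] (hAng : IsNAngulated Ang)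
    (hn : 3 ≤ n) (hEAng : E ⊆ Ang) {J : MorphismProperty T} (hJ : IsIdeal A J)
    (hsp : SpecialPreenveloping A E J) : perpRight A E (perpLeft A E J) ≤ J := by
  rintro Z Y g ⟨hZ, hY, hg⟩
  obtain ⟨_, _, hj, d, hd, rfl, rfl, rfl, C, i, φ, hi, hφ, hph⟩ := hsp Z hZ
  have hzero : d.phantom ≫ S.map g = 0 := by
    rw [hph]
    simpa only [Category.assoc] using hg i hi φ hφ
  obtain ⟨g', hg'⟩ := hAng.exists_mor_comp_eq_of_phantom_comp_eq_zero hn (hEAng hd) g hzero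
  simpa [hg'] using hJ.comp_mem (𝟙 _) _ g' hZ hY hj

end ideals

end IdealApprox

open IdealApprox

/-- `I ⊆ Φ_E(PB_E(I)) ⊆ ⊥(I^⊥)` with equalities for special precovering ideals, and
the dual statement. -/
theorem stmt_18 {T : Type u} [Category.{v} T] [Preadditive T] [HasZeroObject T]
    [HasBinaryBiproducts T] (S : T ⥤ T) [S.IsEquivalence] {n : ℕ} (hn : 3 ≤ n)
    (Ang : Set (NSeq n T S)) (hAng : IsNAngulated Ang)
    (A : Set T) (hA : ClosedUnderExtensions Ang A)
    (E : Set (NSeq n T S)) (hE : IsAlmostNExact Ang A E)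
    (I J : MorphismProperty T) :
    (IsIdeal A I →
      I ≤ relPhant A E (PB E I) ∧
      relPhant A E (PB E I) ≤ perpLeft A E (perpRight A E I) ∧
      (SpecialPrecovering A E I →
        I = relPhant A E (PB E I) ∧
        relPhant A E (PB E I) = perpLeft A E (perpRight A E I))) ∧
    (IsIdeal A J →
      J ≤ relCophant A E (PO E J) ∧
      relCophant A E (PO E J) ≤ perpRight A E (perpLeft A E J) ∧
      (SpecialPreenveloping A E J →
        J = relCophant A E (PO E J) ∧
        relCophant A E (PO E J) = perpRight A E (perpLeft A E J))) := by
  have hEAng : E ⊆ Ang := fun d hd => (hE.subset_DA hd).1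
  refine ⟨fun hI => ?_, fun hJ => ?_⟩
  · have h₁ := le_relPhant_PB hAng hn hA hE hI
    have h₂ := relPhant_PB_le_perpLeft_perpRight (A := A) (E := E) I
    refine ⟨h₁, h₂, fun hsp => ?_⟩
    have h₃ := perpLeft_perpRight_le_of_specialPrecovering hAng hn hEAng hI hsp
    exact ⟨le_antisymm h₁ (h₂.trans h₃), le_antisymm h₂ (h₃.trans h₁)⟩
  · have h₁ := le_relCophant_PO hAng hn hA hE hJ
    have h₂ := relCophant_PO_le_perpRight_perpLeft hAng hn hA hE J
    refine ⟨h₁, h₂, fun hsp => ?_⟩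
    have h₃ := perpRight_perpLeft_le_of_specialPreenveloping hAng hn hEAng hJ hsp
    exact ⟨le_antisymm h₁ (h₂.trans h₃), le_antisymm h₂ (h₃.trans h₁)⟩
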